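/- arXiv:2007.07791 — 6 statements merged into one kernel-verified Lean document; each statement's English description precedes it below -/
import Mathlib

section
/- The function γ_{k,ρ} is concave on the k-positive cone Γ for every ρ ∈ [0,1]. -/
/-!
Writing `F := 1 / γ_{k,ρ}`, each term of `F` is a nonnegative multiple of `1 / ℓ` for a linear form
`ℓ` positive on `Γ`, so `F` is convex and positive on `Γ` and homogeneous of degree `-1`
(positivity of `z₁ + ⋯ + z_n` on `Γ` comes from double counting: every index lies in
`C(n-1, k-1)` of the `k`-subsets). Such an `F` has concave reciprocal: for `a + b = 1`, write
`a z + b w = t (a/t) z + (1-t) (b/(1-t)) w` with `t ∝ a / F z`; convexity and homogeneity then give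
`F (a z + b w) ≤ (a / F z + b / F w)⁻¹`.
-/

open Finset

def kCone (n k : ℕ) : Set (Fin n → ℝ) :=
  {z | ∀ s : Finset (Fin n), s.card = k → 0 < ∑ i ∈ s, z i}

noncomputable def gammaOne (n k : ℕ) (z : Fin n → ℝ) : ℝ :=
  (∑ s ∈ Finset.powersetCard k (Finset.univ : Finset (Fin n)), (∑ i ∈ s, z i)⁻¹)⁻¹

noncomputable def gammaRho (n k : ℕ) (ρ : ℝ) (z : Fin n → ℝ) : ℝ :=
  ((∑ s ∈ Finset.powersetCard k (Finset.univ : Finset (Fin n)), ρ / (∑ i ∈ s, z i)) +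
    (1 - ρ) / (∑ i, z i))⁻¹

theorem sum_powersetCard_sum_eq_choose_smul {α M : Type*} [DecidableEq α] [AddCommMonoid M]
    {k : ℕ} (hk : 1 ≤ k) (t : Finset α) (f : α → M) :
    ∑ s ∈ t.powersetCard k, ∑ i ∈ s, f i = (#t - 1).choose (k - 1) • ∑ i ∈ t, f i := by
  rw [sum_comm' (t' := t) (s' := fun i => {s ∈ t.powersetCard k | {i} ⊆ s}), smul_sum]
  · refine sum_congr rfl fun i hi => ?_
    rw [sum_const, card_filter_powersetCard_subset _ _ _ (singleton_subset_iff.2 hi) (by simpa),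
      card_singleton]
  · intro s i
    simp only [mem_filter, mem_powersetCard, singleton_subset_iff]
    exact ⟨fun ⟨⟨hst, hs⟩, hi⟩ => ⟨⟨⟨hst, hs⟩, hi⟩, hst hi⟩, fun ⟨h, _⟩ => h⟩

theorem ConvexOn.finset_sum {𝕜 E β ι : Type*} [Semiring 𝕜] [PartialOrder 𝕜] [AddCommMonoid E]
    [AddCommMonoid β] [PartialOrder β] [IsOrderedAddMonoid β] [SMul 𝕜 E] [DistribMulAction 𝕜 β]
    {s : Set E} (hs : Convex 𝕜 s) (T : Finset ι) {f : ι → E → β}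
    (hf : ∀ i ∈ T, ConvexOn 𝕜 s (f i)) : ConvexOn 𝕜 s fun x => ∑ i ∈ T, f i x := by
  refine ⟨hs, fun x hx y hy a b ha hb hab => ?_⟩
  calc ∑ i ∈ T, f i (a • x + b • y) ≤ ∑ i ∈ T, (a • f i x + b • f i y) :=
        sum_le_sum fun i hi => (hf i hi).2 hx hy ha hb hab
    _ = a • ∑ i ∈ T, f i x + b • ∑ i ∈ T, f i y := by rw [sum_add_distrib, smul_sum, smul_sum]

section LinearOrderedField

variable {𝕜 E : Type*} [Field 𝕜] [LinearOrder 𝕜] [IsStrictOrderedRing 𝕜] [AddCommGroup E]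
  [Module 𝕜 E]

theorem convexOn_div_of_isLinearMap {ℓ : E → 𝕜} (hℓ : IsLinearMap 𝕜 ℓ) {c : 𝕜} (hc : 0 ≤ c) :
    ConvexOn 𝕜 {z | 0 < ℓ z} fun z => c / ℓ z := by
  refine (((convexOn_zpow (-1)).smul hc).comp_linearMap (hℓ.mk' ℓ)).congr fun z _ => ?_
  simp [div_eq_mul_inv]

theorem ConvexOn.concaveOn_inv_of_homogeneous {C : Set E} {F : E → 𝕜} (hF : ConvexOn 𝕜 C F)
    (hC : ∀ z ∈ C, ∀ a : 𝕜, 0 < a → a • z ∈ C) (hpos : ∀ z ∈ C, 0 < F z)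
    (hhom : ∀ z ∈ C, ∀ a : 𝕜, 0 < a → F (a • z) = a⁻¹ * F z) :
    ConcaveOn 𝕜 C fun z => (F z)⁻¹ := by
  refine concaveOn_iff_forall_pos.2 ⟨hF.1, fun z hz w hw a b ha hb hab => ?_⟩
  have hp := hpos z hz
  have hq := hpos w hw
  set S := a / F z + b / F w with hS
  have hSpos : 0 < S := by positivity
  set t := a / F z / S with ht
  have ht0 : 0 < t := by positivity
  have ht1 : 1 - t = b / F w / S := by rw [ht, hS]; field_simp; ring
  have ht1pos : 0 < 1 - t := by rw [ht1]; positivity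
  have hsplit : a • z + b • w = t • ((a / t) • z) + (1 - t) • ((b / (1 - t)) • w) := by
    rw [smul_smul, smul_smul, mul_div_cancel₀ _ ht0.ne', mul_div_cancel₀ _ ht1pos.ne']
  have hle : F (a • z + b • w) ≤ S⁻¹ :=
    calc F (a • z + b • w) ≤ t * F ((a / t) • z) + (1 - t) * F ((b / (1 - t)) • w) := by
          rw [hsplit]
          exact hF.2 (hC z hz _ (by positivity)) (hC w hw _ (by positivity)) ht0.le ht1pos.le
            (by ring)
      _ = t ^ 2 / a * F z + (1 - t) ^ 2 / b * F w := by
          rw [hhom z hz _ (by positivity), hhom w hw _ (by positivity)]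
          field_simp
      _ = S⁻¹ := by
          rw [ht1, ht, hS]
          field_simp
  calc a • (F z)⁻¹ + b • (F w)⁻¹ = S := by simp only [hS, smul_eq_mul, div_eq_mul_inv]
    _ ≤ (F (a • z + b • w))⁻¹ := by
        rw [← inv_inv S]
        exact inv_anti₀ (hpos _ (hF.1 hz hw ha.le hb.le hab)) hle

end LinearOrderedField

theorem isLinearMap_sum_apply {R ι : Type*} [CommSemiring R] (s : Finset ι) :
    IsLinearMap R fun z : ι → R => ∑ i ∈ s, z i :=
  ⟨fun z w => by simp [sum_add_distrib], fun a z => by simp [mul_sum]⟩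

section kCone

variable {n k : ℕ}

theorem convex_kCone : Convex ℝ (kCone n k) := by
  simp only [kCone, Set.ofPred_forall]
  exact convex_iInter fun s => convex_iInter fun _ =>
    convex_halfSpace_gt (isLinearMap_sum_apply s) 0

theorem smul_mem_kCone {z : Fin n → ℝ} (hz : z ∈ kCone n k) {a : ℝ} (ha : 0 < a) :
    a • z ∈ kCone n k := fun s hs => by
  simpa [← mul_sum] using mul_pos ha (hz s hs)

theorem sum_pos_of_mem_kCone (hk : 1 ≤ k) (hkn : k ≤ n) {z : Fin n → ℝ} (hz : z ∈ kCone n k) :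
    0 < ∑ i, z i := by
  have hP : (powersetCard k (univ : Finset (Fin n))).Nonempty :=
    powersetCard_nonempty.2 (by simpa using hkn)
  have h := sum_pos (fun s hs => hz s (mem_powersetCard_univ.1 hs)) hP
  rw [sum_powersetCard_sum_eq_choose_smul hk, nsmul_eq_mul] at h
  exact pos_of_mul_pos_right h (Nat.cast_nonneg _)

end kCone

noncomputable def gammaRhoInv (n k : ℕ) (ρ : ℝ) (z : Fin n → ℝ) : ℝ :=
  (∑ s ∈ powersetCard k (univ : Finset (Fin n)), ρ / (∑ i ∈ s, z i)) + (1 - ρ) / (∑ i, z i)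

section gammaRhoInv

variable {n k : ℕ} {ρ : ℝ}

theorem convexOn_gammaRhoInv (hk : 1 ≤ k) (hkn : k ≤ n) (hρ0 : 0 ≤ ρ) (hρ1 : ρ ≤ 1) :
    ConvexOn ℝ (kCone n k) (gammaRhoInv n k ρ) := by
  have hterm : ∀ (s : Finset (Fin n)) {c : ℝ}, 0 ≤ c → (∀ z ∈ kCone n k, 0 < ∑ i ∈ s, z i) →
      ConvexOn ℝ (kCone n k) fun z => c / ∑ i ∈ s, z i := fun s c hc hs =>
    (convexOn_div_of_isLinearMap (isLinearMap_sum_apply s) hc).subset hs convex_kCone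
  exact (ConvexOn.finset_sum convex_kCone _ fun s hs =>
      hterm s hρ0 fun z hz => hz s (mem_powersetCard_univ.1 hs)).add
    (hterm univ (sub_nonneg.2 hρ1) fun z hz => sum_pos_of_mem_kCone hk hkn hz)

theorem gammaRhoInv_pos (hk : 1 ≤ k) (hkn : k ≤ n) (hρ0 : 0 ≤ ρ) (hρ1 : ρ ≤ 1)
    {z : Fin n → ℝ} (hz : z ∈ kCone n k) : 0 < gammaRhoInv n k ρ z := by
  have hsum := sum_pos_of_mem_kCone hk hkn hz
  rcases hρ1.lt_or_eq with hρ1 | rfl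
  · exact add_pos_of_nonneg_of_pos
      (sum_nonneg fun s hs => div_nonneg hρ0 (hz s (mem_powersetCard_univ.1 hs)).le)
      (div_pos (sub_pos.2 hρ1) hsum)
  · rw [gammaRhoInv, sub_self, zero_div, add_zero]
    exact sum_pos (fun s hs => div_pos one_pos (hz s (mem_powersetCard_univ.1 hs)))
      (powersetCard_nonempty.2 (by simpa using hkn))

theorem gammaRhoInv_smul (a : ℝ) (z : Fin n → ℝ) :
    gammaRhoInv n k ρ (a • z) = a⁻¹ * gammaRhoInv n k ρ z := by
  have h (c x : ℝ) : c / (a * x) = a⁻¹ * (c / x) := by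
    rw [mul_comm a, ← div_div, div_eq_inv_mul _ a]
  simp only [gammaRhoInv, Pi.smul_apply, smul_eq_mul, ← mul_sum, h, mul_add]

end gammaRhoInv

theorem gammaRho_concave_general (n k : ℕ) (hk : 1 ≤ k) (hkn : k ≤ n - 1)
    (ρ : ℝ) (hρ0 : 0 ≤ ρ) (hρ1 : ρ ≤ 1) :
    ConcaveOn ℝ (kCone n k) (gammaRho n k ρ) :=
  have hkn' : k ≤ n := by omega
  (convexOn_gammaRhoInv hk hkn' hρ0 hρ1).concaveOn_inv_of_homogeneous
    (fun _ hz _ ha => smul_mem_kCone hz ha) (fun _ => gammaRhoInv_pos hk hkn' hρ0 hρ1)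
    fun z _ a _ => gammaRhoInv_smul a z

theorem gammaRho_concave (n k : ℕ) (hn : 2 ≤ n) (hk : 1 ≤ k) (hkn : k ≤ n - 1)
    (ρ : ℝ) (hρ0 : 0 ≤ ρ) (hρ1 : ρ ≤ 1) :
    ConcaveOn ℝ (kCone n k) (gammaRho n k ρ) :=
  gammaRho_concave_general n k hk hkn ρ hρ0 hρ1
end

section
/- Let Γ' ⊂ {y ∈ ℝⁿ : tr(y) > 0} be an open symmetric convex cone and γ : Γ' → ℝ be smooth, symmetric, one-homogeneous, concave, with γ(1,…,1) > 0. Then for any z ∈ Γ' with z₁ ≤ ⋯ ≤ z_n, the first partial derivative satisfies ∂γ/∂z₁ (z) ≥ 0. -/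
open Finset Topology

section aux
variable {n : ℕ} {Γ' : Set (Fin n → ℝ)} {γ : (Fin n → ℝ) → ℝ}

lemma aux_diff (hopen : IsOpen Γ') (hsmooth : ContDiffOn ℝ (⊤ : ℕ∞) γ Γ')
    {z : Fin n → ℝ} (hz : z ∈ Γ') : DifferentiableAt ℝ γ z :=
  (hsmooth.contDiffAt (hopen.mem_nhds hz)).differentiableAt (by simp)

lemma aux_dir (hopen : IsOpen Γ') (hsmooth : ContDiffOn ℝ (⊤ : ℕ∞) γ Γ')
    (hconc : ConcaveOn ℝ Γ' γ)
    {z w : Fin n → ℝ} (hz : z ∈ Γ') (hw : w ∈ Γ') :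
    γ w - γ z ≤ fderiv ℝ γ z (w - z) := by
  set f : ℝ → ℝ := fun t => γ (z + t • (w - z)) with hf
  have hline : HasDerivAt (fun t : ℝ => z + t • (w - z)) (w - z) 0 := by
    simpa using ((hasDerivAt_id (0:ℝ)).smul_const (w - z)).const_add z
  have hγ : HasFDerivAt γ (fderiv ℝ γ z) (z + (0:ℝ) • (w - z)) := by
    rw [show z + (0:ℝ) • (w - z) = z by simp]
    exact (aux_diff hopen hsmooth hz).hasFDerivAt
  have hfd : HasDerivAt f (fderiv ℝ γ z (w - z)) 0 := by
    simpa [hf, Function.comp_def] using hγ.comp_hasDerivAt 0 hline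
  have hslope := hasDerivAt_iff_tendsto_slope.1 hfd
  have hle : 𝓝[>] (0:ℝ) ≤ 𝓝[≠] (0:ℝ) :=
    nhdsWithin_mono _ (fun t ht => ne_of_gt ht)
  refine ge_of_tendsto (hslope.mono_left hle) ?_
  filter_upwards [Ioo_mem_nhdsGT_of_mem (show (0:ℝ) ∈ Set.Ico (0:ℝ) 1 by simp)] with t ht
  have ht0 : 0 < t := ht.1
  have ht1 : t < 1 := ht.2
  have hmem : z + t • (w - z) = (1 - t) • z + t • w := by module
  have hcc := hconc.2 hz hw (by linarith : (0:ℝ) ≤ 1 - t) (le_of_lt ht0) (by ring)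
  have hft : γ z + t * (γ w - γ z) ≤ f t := by
    simp only [hf, hmem]
    calc γ z + t * (γ w - γ z) = (1 - t) • γ z + t • γ w := by
          simp [smul_eq_mul]; ring
      _ ≤ γ ((1 - t) • z + t • w) := hcc
  have hf0 : f 0 = γ z := by simp [hf]
  rw [slope_def_field, hf0, sub_zero, le_div_iff₀ ht0]
  linarith

lemma aux_euler (hopen : IsOpen Γ') (hsmooth : ContDiffOn ℝ (⊤ : ℕ∞) γ Γ')
    (hhom : ∀ (s : ℝ), 0 < s → ∀ z ∈ Γ', γ (s • z) = s * γ z)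
    {z : Fin n → ℝ} (hz : z ∈ Γ') :
    fderiv ℝ γ z z = γ z := by
  have hline : HasDerivAt (fun s : ℝ => s • z) z 1 := by
    simpa using (hasDerivAt_id (1:ℝ)).smul_const z
  have hγ : HasFDerivAt γ (fderiv ℝ γ z) ((1:ℝ) • z) := by
    rw [one_smul]; exact (aux_diff hopen hsmooth hz).hasFDerivAt
  have hfd : HasDerivAt (fun s : ℝ => γ (s • z)) (fderiv ℝ γ z z) 1 := by
    simpa [Function.comp_def] using hγ.comp_hasDerivAt 1 hline
  have heq : (fun s : ℝ => s * γ z) =ᶠ[𝓝 (1:ℝ)] fun s : ℝ => γ (s • z) := by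
    filter_upwards [eventually_gt_nhds (show (0:ℝ) < 1 by norm_num)] with s hs
    exact (hhom s hs z hz).symm
  have hfd2 : HasDerivAt (fun s : ℝ => γ (s • z)) (γ z) 1 := by
    have h : HasDerivAt (fun s : ℝ => s * γ z) (γ z) 1 := hasDerivAt_mul_const (γ z)
    exact h.congr_of_eventuallyEq heq.symm
  exact hfd.unique hfd2

lemma aux_symm (hopen : IsOpen Γ') (hsmooth : ContDiffOn ℝ (⊤ : ℕ∞) γ Γ')
    (hΓsymm : ∀ (σ : Equiv.Perm (Fin n)), ∀ z ∈ Γ', z ∘ σ ∈ Γ')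
    (hγsymm : ∀ (σ : Equiv.Perm (Fin n)), ∀ z ∈ Γ', γ (z ∘ σ) = γ z)
    (σ : Equiv.Perm (Fin n)) {z : Fin n → ℝ} (hz : z ∈ Γ') (v : Fin n → ℝ) :
    fderiv ℝ γ (z ∘ σ) (v ∘ σ) = fderiv ℝ γ z v := by
  set P : (Fin n → ℝ) →L[ℝ] (Fin n → ℝ) :=
    (LinearMap.funLeft ℝ ℝ σ).toContinuousLinearMap with hP
  have hPapp : ∀ x : Fin n → ℝ, P x = x ∘ σ := fun x => rfl
  have hd : DifferentiableAt ℝ γ (P z) := by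
    rw [hPapp]; exact aux_diff hopen hsmooth (hΓsymm σ z hz)
  have hcomp : fderiv ℝ (γ ∘ P) z = (fderiv ℝ γ (z ∘ σ)).comp P := by
    rw [fderiv_comp z hd P.differentiableAt, P.fderiv, hPapp]
  have hcongr : γ ∘ P =ᶠ[𝓝 z] γ := by
    filter_upwards [hopen.mem_nhds hz] with x hx
    exact hγsymm σ x hx
  have : fderiv ℝ (γ ∘ P) z = fderiv ℝ γ z := hcongr.fderiv_eq
  rw [hcomp] at this
  rw [← this]
  rfl

lemma aux_ones (hn : 0 < n)
    (hΓsymm : ∀ (σ : Equiv.Perm (Fin n)), ∀ z ∈ Γ', z ∘ σ ∈ Γ')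
    (hconv : Convex ℝ Γ')
    (hcone : ∀ (s : ℝ), 0 < s → ∀ z ∈ Γ', s • z ∈ Γ')
    (hsub : Γ' ⊆ {z | 0 < ∑ i, z i})
    {z : Fin n → ℝ} (hz : z ∈ Γ') :
    (fun _ : Fin n => (1:ℝ)) ∈ Γ' := by
  haveI : NeZero n := ⟨hn.ne'⟩
  set S := ∑ i, z i with hS
  have hSpos : 0 < S := hsub hz
  have hnpos : (0:ℝ) < n := by exact_mod_cast hn
  have havg : (∑ k : Fin n, ((n:ℝ))⁻¹ • (z ∘ (Equiv.addLeft k : Equiv.Perm (Fin n)))) ∈ Γ' := by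
    apply hconv.sum_mem (fun _ _ => by positivity) ?_ (fun k _ => hΓsymm _ z hz)
    simp [Finset.sum_const, Finset.card_univ]
  have heq : (∑ k : Fin n, ((n:ℝ))⁻¹ • (z ∘ (Equiv.addLeft k : Equiv.Perm (Fin n))))
      = (S / n) • (fun _ : Fin n => (1:ℝ)) := by
    funext j
    have hre : ∑ k : Fin n, z (k + j) = S := by
      rw [hS]; exact Fintype.sum_equiv (Equiv.addRight j) _ _ (fun k => rfl)
    simp only [Finset.sum_apply, Pi.smul_apply, Function.comp_apply, smul_eq_mul]
    have haddl : ∀ k : Fin n, (Equiv.addLeft k : Equiv.Perm (Fin n)) j = k + j := fun k => rfl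
    simp only [haddl]
    rw [← Finset.mul_sum, hre]
    field_simp
  have h1 : ((n:ℝ)/S) • ((S/n) • (fun _ : Fin n => (1:ℝ))) = fun _ : Fin n => (1:ℝ) := by
    rw [smul_smul, show (n:ℝ)/S * (S/n) = 1 by field_simp]
    exact one_smul _ _
  rw [← h1]
  exact hcone _ (by positivity) _ (heq ▸ havg)

end aux


theorem first_deriv_nonneg (n : ℕ) (hn : 0 < n) (Γ' : Set (Fin n → ℝ)) (hopen : IsOpen Γ')
    (hsub : Γ' ⊆ {z | 0 < ∑ i, z i})
    (hΓsymm : ∀ (σ : Equiv.Perm (Fin n)), ∀ z ∈ Γ', z ∘ σ ∈ Γ')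
    (hconv : Convex ℝ Γ')
    (hcone : ∀ (s : ℝ), 0 < s → ∀ z ∈ Γ', s • z ∈ Γ')
    (γ : (Fin n → ℝ) → ℝ)
    (hsmooth : ContDiffOn ℝ (⊤ : ℕ∞) γ Γ')
    (hγsymm : ∀ (σ : Equiv.Perm (Fin n)), ∀ z ∈ Γ', γ (z ∘ σ) = γ z)
    (hhom : ∀ (s : ℝ), 0 < s → ∀ z ∈ Γ', γ (s • z) = s * γ z)
    (hconc : ConcaveOn ℝ Γ' γ)
    (hpos : 0 < γ (fun _ => 1)) :
    ∀ z ∈ Γ', Monotone z → 0 ≤ fderiv ℝ γ z (Pi.single (⟨0, hn⟩ : Fin n) 1) := by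
  intro z hz hmono
  set z0 : Fin n := ⟨0, hn⟩ with hz0
  set D := fderiv ℝ γ z with hD
  -- Step 1: ∂ᵢ ≤ ∂₀ for all i
  have hmax : ∀ i : Fin n, D (Pi.single i 1) ≤ D (Pi.single z0 1) := by
    intro i
    rcases eq_or_ne i z0 with rfl | hne
    · exact le_rfl
    set v : Fin n → ℝ := Pi.single z0 1 - Pi.single i 1 with hv
    have hDv : D v = D (Pi.single z0 1) - D (Pi.single i 1) := map_sub D _ _
    suffices h : 0 ≤ D v by linarith [hDv ▸ h]
    set σ : Equiv.Perm (Fin n) := Equiv.swap z0 i with hσ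
    have hσ0 : σ z0 = i := Equiv.swap_apply_left z0 i
    have hσi : σ i = z0 := Equiv.swap_apply_right z0 i
    have hσo : ∀ j, j ≠ z0 → j ≠ i → σ j = j := fun j h1 h2 => Equiv.swap_apply_of_ne_of_ne h1 h2
    have hvσ : v ∘ σ = -v := by
      funext j
      rcases eq_or_ne j z0 with rfl | hj0
      · simp [hv, Function.comp_apply, hσ0, Pi.single_eq_of_ne hne.symm,
          Pi.single_eq_of_ne hne]
      rcases eq_or_ne j i with rfl | hji
      · simp [hv, Function.comp_apply, hσi, Pi.single_eq_of_ne hne,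
          Pi.single_eq_of_ne hne.symm]
      · simp [hv, Function.comp_apply, hσo j hj0 hji,
          Pi.single_eq_of_ne hj0, Pi.single_eq_of_ne hji]
    have hw : z ∘ σ ∈ Γ' := hΓsymm σ z hz
    have hc : z ∘ σ - z = (z i - z z0) • v := by
      funext j
      simp only [Pi.sub_apply, Function.comp_apply, Pi.smul_apply, smul_eq_mul, hv,
        Pi.single_apply]
      rcases eq_or_ne j z0 with rfl | hj0
      · rw [hσ0]; simp [hne, hne.symm]
      rcases eq_or_ne j i with rfl | hji
      · rw [hσi]; simp [hne, hne.symm]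
      · rw [hσo j hj0 hji]; simp [hj0, hji]
    set c : ℝ := z i - z z0 with hcdef
    have hc0 : 0 ≤ c := by
      have : z z0 ≤ z i := hmono (by simp [hz0, Fin.le_def])
      linarith
    have hDσv : fderiv ℝ γ (z ∘ σ) v = -D v := by
      have h1 : fderiv ℝ γ (z ∘ σ) ((-v) ∘ σ) = D (-v) :=
        aux_symm hopen hsmooth hΓsymm hγsymm σ hz (-v)
      have h2 : (-v) ∘ σ = v := by
        funext j; simp [Function.comp_apply]
        have := congrFun hvσ j
        simp [Function.comp_apply] at this
        linarith [this]
      rw [h2] at h1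
      rw [h1, map_neg]
    rcases eq_or_lt_of_le hc0 with hceq | hclt
    · -- c = 0 : z ∘ σ = z, and symmetry forces D v = 0
      have hzz : z ∘ σ = z := by
        have := hc
        rw [← hceq, zero_smul] at this
        exact sub_eq_zero.1 this
      rw [hzz] at hDσv
      have : D v = 0 := by rw [hD] at hDσv ⊢; linarith
      rw [this]
    · -- c > 0 : gradient monotonicity
      have hA := aux_dir hopen hsmooth hconc hz hw
      have hB := aux_dir hopen hsmooth hconc hw hz
      have hzw : z - z ∘ σ = (-c) • v := by
        rw [show z - z ∘ σ = -(z ∘ σ - z) by abel, hc, ← neg_smul]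
      rw [hc, map_smul, smul_eq_mul] at hA
      rw [hzw, map_smul, smul_eq_mul, hDσv] at hB
      nlinarith [hA, hB, hclt]
  -- Step 2: sum of partials
  have hones : (fun _ : Fin n => (1:ℝ)) ∈ Γ' :=
    aux_ones hn hΓsymm hconv hcone hsub hz
  have heuler : D z = γ z := aux_euler hopen hsmooth hhom hz
  have hone_le : γ (fun _ : Fin n => (1:ℝ)) ≤ D (fun _ : Fin n => (1:ℝ)) := by
    have hdir := aux_dir hopen hsmooth hconc hz hones
    rw [map_sub, heuler] at hdir
    linarith
  have hsingle : (∑ i : Fin n, Pi.single i (1:ℝ)) = fun _ : Fin n => (1:ℝ) := by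
    funext j
    simp [Finset.sum_apply, Pi.single_apply]
  have hsum : D (fun _ : Fin n => (1:ℝ)) = ∑ i : Fin n, D (Pi.single i 1) := by
    rw [← hsingle, map_sum]
  have hbound : ∑ i : Fin n, D (Pi.single i 1) ≤ (n : ℝ) * D (Pi.single z0 1) := by
    calc ∑ i : Fin n, D (Pi.single i 1) ≤ ∑ _i : Fin n, D (Pi.single z0 1) :=
          Finset.sum_le_sum (fun i _ => hmax i)
      _ = (n : ℝ) * D (Pi.single z0 1) := by
          simp [Finset.sum_const, Finset.card_univ, nsmul_eq_mul]
  have hnpos : (0:ℝ) < n := by exact_mod_cast hn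
  have hkey : 0 < (n : ℝ) * D (Pi.single z0 1) := by
    have := hpos
    rw [hsum] at hone_le
    linarith
  nlinarith [hkey, hnpos]
end

section
/- Let Γ' ⊂ {tr > 0} be an open symmetric convex cone and γ smooth, symmetric, one-homogeneous, concave on Γ' with γ(1,…,1) > 0. Then for any z ∈ Γ', ∑_{i=1}^n (∂γ/∂z_i)(z) ≥ 0. -/
open Finset

/-- Gradient inequality for concave functions: γ y - γ z ≤ L (y - z). -/
lemma concave_grad_ineq {E : Type*} [NormedAddCommGroup E] [NormedSpace ℝ E]
    {Γ' : Set E} {γ : E → ℝ} {z y : E} {L : E →L[ℝ] ℝ}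
    (hconc : ConcaveOn ℝ Γ' γ) (hz : z ∈ Γ') (hy : y ∈ Γ')
    (hL : HasFDerivAt γ L z) : γ y - γ z ≤ L (y - z) := by
  set g : ℝ → E := fun t => z + t • (y - z) with hg
  have hline : HasDerivAt g (y - z) 0 := by
    simpa [hg] using ((hasDerivAt_id (0 : ℝ)).smul_const (y - z)).const_add z
  have hL' : HasFDerivAt γ L (g 0) := by simpa [hg] using hL
  have hcomp : HasDerivAt (γ ∘ g) (L (y - z)) 0 := hL'.comp_hasDerivAt 0 hline
  have htend := hasDerivAt_iff_tendsto_slope.mp hcomp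
  have htend2 : Filter.Tendsto (slope (γ ∘ g) 0) (nhdsWithin 0 (Set.Ioi 0)) (nhds (L (y - z))) :=
    htend.mono_left (nhdsWithin_mono _ (fun x hx => ne_of_gt hx))
  refine ge_of_tendsto htend2 ?_
  filter_upwards [Ioc_mem_nhdsGT_of_mem (Set.mem_Ico.mpr ⟨le_refl (0:ℝ), one_pos⟩)] with t ht
  obtain ⟨ht0, ht1⟩ := ht
  have hcomb := hconc.2 hz hy (by linarith : (0:ℝ) ≤ 1 - t) (le_of_lt ht0) (by ring)
  have hgt : g t = (1 - t) • z + t • y := by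
    simp [hg, smul_sub, sub_smul]; abel
  have hg0 : g 0 = z := by simp [hg]
  rw [slope_def_field, Function.comp_apply, Function.comp_apply, hgt, hg0, sub_zero,
    le_div_iff₀ ht0]
  simp only [smul_eq_mul] at hcomb
  nlinarith [hcomb]

theorem sum_derivs_nonneg (n : ℕ) (Γ' : Set (Fin n → ℝ)) (hopen : IsOpen Γ')
    (hsub : Γ' ⊆ {z | 0 < ∑ i, z i})
    (hΓsymm : ∀ (σ : Equiv.Perm (Fin n)), ∀ z ∈ Γ', z ∘ σ ∈ Γ')
    (hconv : Convex ℝ Γ')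
    (hcone : ∀ (s : ℝ), 0 < s → ∀ z ∈ Γ', s • z ∈ Γ')
    (γ : (Fin n → ℝ) → ℝ)
    (hsmooth : ContDiffOn ℝ (⊤ : ℕ∞) γ Γ')
    (hγsymm : ∀ (σ : Equiv.Perm (Fin n)), ∀ z ∈ Γ', γ (z ∘ σ) = γ z)
    (hhom : ∀ (s : ℝ), 0 < s → ∀ z ∈ Γ', γ (s • z) = s * γ z)
    (hconc : ConcaveOn ℝ Γ' γ)
    (hpos : 0 < γ (fun _ => 1)) :
    ∀ z ∈ Γ', 0 ≤ ∑ i, fderiv ℝ γ z (Pi.single i 1) := by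
  intro z hz
  have htr : 0 < ∑ i, z i := hsub hz
  have hn : 0 < n := by
    rcases Nat.eq_zero_or_pos n with h | h
    · subst h; simp at htr
    · exact h
  haveI : NeZero n := ⟨hn.ne'⟩
  set t : ℝ := (∑ i, z i) / n with ht
  have htpos : 0 < t := div_pos htr (by positivity)
  set zbar : Fin n → ℝ := fun _ => t with hzbardef
  -- zbar is a convex combination of shifts of z
  have hzbar : zbar ∈ Γ' := by
    have hmem := hconv.sum_mem (t := Finset.univ)
      (w := fun _ : Fin n => (n : ℝ)⁻¹)
      (z := fun k : Fin n => z ∘ (Equiv.addRight k))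
      (fun _ _ => by positivity)
      (by simp [Finset.card_univ])
      (fun k _ => hΓsymm (Equiv.addRight k) z hz)
    have heq : (∑ k : Fin n, (n : ℝ)⁻¹ • (z ∘ (Equiv.addRight k))) = zbar := by
      funext i
      simp only [Finset.sum_apply, Pi.smul_apply, Function.comp_apply, Equiv.coe_addRight,
        smul_eq_mul]
      rw [← Finset.mul_sum]
      have : (∑ k : Fin n, z (i + k)) = ∑ k : Fin n, z k :=
        Fintype.sum_equiv (Equiv.addLeft i) _ _ (fun k => rfl)
      rw [this, hzbardef, ht]
      field_simp
    rwa [heq] at hmem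
  have hone : (fun _ : Fin n => (1 : ℝ)) ∈ Γ' := by
    have hmem := hcone t⁻¹ (by positivity) zbar hzbar
    have : t⁻¹ • zbar = fun _ : Fin n => (1 : ℝ) := by
      funext i; simp [hzbardef, Pi.smul_apply]; field_simp
    rwa [this] at hmem
  have hzbar_eq : zbar = t • (fun _ : Fin n => (1 : ℝ)) := by
    funext i; simp [hzbardef]
  have hγzbar : γ zbar = t * γ (fun _ => 1) := by
    rw [hzbar_eq]; exact hhom t htpos _ hone
  have hγzbarpos : 0 < γ zbar := by rw [hγzbar]; positivity
  have hdiff : DifferentiableAt ℝ γ z :=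
    ((hsmooth z hz).contDiffAt (hopen.mem_nhds hz)).differentiableAt (by simp)
  set L := fderiv ℝ γ z with hLdef
  have hL : HasFDerivAt γ L z := hdiff.hasFDerivAt
  have key : ∀ s : ℝ, 0 < s → s * γ zbar - γ z ≤ s * L zbar - L z := by
    intro s hs
    have h1 := concave_grad_ineq hconc hz (hcone s hs zbar hzbar) hL
    rw [hhom s hs zbar hzbar] at h1
    have h2 : L (s • zbar - z) = s * L zbar - L z := by
      rw [map_sub, map_smul]; simp
    linarith [h1, h2.le, h2.ge]
  have hLzbar : γ zbar ≤ L zbar := by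
    by_contra hlt
    push_neg at hlt
    have h1 := key 1 one_pos
    have hd : 0 < γ zbar - L zbar := by linarith
    have hC : 0 < γ z - L z := by linarith
    set s0 : ℝ := (γ z - L z) / (γ zbar - L zbar) + 1 with hs0def
    have hs0 : 0 < s0 := by positivity
    have h2 := key s0 hs0
    have h3 : s0 * (γ zbar - L zbar) = (γ z - L z) + (γ zbar - L zbar) := by
      rw [hs0def, add_mul, div_mul_cancel₀ _ hd.ne', one_mul]
    nlinarith
  have hsum : (∑ i, L (Pi.single i 1)) = L (fun _ => 1) := by
    rw [← map_sum]
    congr 1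
    exact Finset.univ_sum_single (fun _ => (1 : ℝ))
  have hLone : L zbar = t * L (fun _ => 1) := by
    rw [hzbar_eq, map_smul]; simp
  have hfinal : 0 ≤ L (fun _ => 1) := by
    rw [hγzbar, hLone] at hLzbar
    have := (mul_le_mul_iff_of_pos_left htpos).mp hLzbar
    linarith
  rw [hLdef] at hsum hfinal
  rw [hsum]
  exact hfinal
end

section
/- Fix ρ ∈ (0,1] and z in the k-positive cone Γ. Then, as quadratic forms on ℝⁿ, ρ Dγ_{k,1}(z) + (1-ρ)(γ_{k,1}(z)²/tr(z)²) Id ≤ Dγ_{k,ρ}(z) ≤ min{ρ^{-1}, tr(z)²/γ_{k,1}(z)²} Dγ_{k,1}(z) + Id. -/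
open Finset

lemma gamma_algebra (S T ρ B C : ℝ) (hS : 0 < S) (hT : 0 < T) (hρ0 : 0 < ρ) (hρ1 : ρ ≤ 1)
    (hST : 1 ≤ S * T) (hB : 0 ≤ B) (hC : 0 ≤ C) :
    ρ * ((S ^ 2)⁻¹ * B) + (1 - ρ) * (S⁻¹ ^ 2 / T ^ 2) * C ≤
      ((ρ * S + (1 - ρ) / T) ^ 2)⁻¹ * (ρ * B + (1 - ρ) * (T ^ 2)⁻¹ * C) ∧
    ((ρ * S + (1 - ρ) / T) ^ 2)⁻¹ * (ρ * B + (1 - ρ) * (T ^ 2)⁻¹ * C) ≤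
      min ρ⁻¹ (T ^ 2 / S⁻¹ ^ 2) * ((S ^ 2)⁻¹ * B) + C := by
  set Q : ℝ := ρ * S + (1 - ρ) / T with hQdef
  have hρ1' : 0 ≤ 1 - ρ := by linarith
  have hTS' : T⁻¹ ≤ S := by
    rw [← one_div]
    exact (div_le_iff₀ hT).2 hST
  have hQ : 0 < Q := by
    have : 0 ≤ (1 - ρ) / T := div_nonneg hρ1' hT.le
    have : 0 < ρ * S := mul_pos hρ0 hS
    rw [hQdef]; linarith
  have hQleS : Q ≤ S := by
    rw [hQdef, div_eq_mul_inv]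
    nlinarith [mul_le_mul_of_nonneg_left hTS' hρ1']
  have hQgeT : T⁻¹ ≤ Q := by
    rw [hQdef, div_eq_mul_inv]
    nlinarith [mul_le_mul_of_nonneg_left hTS' hρ0.le]
  have hQgeρS : ρ * S ≤ Q := by
    have : 0 ≤ (1 - ρ) / T := div_nonneg hρ1' hT.le
    rw [hQdef]; linarith
  have i1 : (S ^ 2)⁻¹ ≤ (Q ^ 2)⁻¹ := by
    apply inv_anti₀ (by positivity)
    nlinarith
  have i2 : (Q ^ 2)⁻¹ ≤ T ^ 2 := by
    have h1 : (T ^ 2)⁻¹ ≤ Q ^ 2 := by rw [← inv_pow]; nlinarith [inv_pos.2 hT]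
    have h2 := inv_anti₀ (by positivity : (0:ℝ) < (T ^ 2)⁻¹) h1
    rwa [inv_inv] at h2
  have i3 : (Q ^ 2)⁻¹ ≤ ρ⁻¹ * ρ⁻¹ * (S ^ 2)⁻¹ := by
    have h1 : (ρ * S) ^ 2 ≤ Q ^ 2 := by nlinarith [mul_pos hρ0 hS]
    have h2 := inv_anti₀ (by positivity : (0:ℝ) < (ρ * S) ^ 2) h1
    calc (Q ^ 2)⁻¹ ≤ ((ρ * S) ^ 2)⁻¹ := h2
      _ = ρ⁻¹ * ρ⁻¹ * (S ^ 2)⁻¹ := by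
        rw [mul_pow, mul_inv, sq ρ, mul_inv]
  constructor
  · have p1 : ρ * ((S ^ 2)⁻¹ * B) ≤ ρ * ((Q ^ 2)⁻¹ * B) :=
      mul_le_mul_of_nonneg_left (mul_le_mul_of_nonneg_right i1 hB) hρ0.le
    have p2 : (1 - ρ) * (S⁻¹ ^ 2 / T ^ 2) * C ≤ (1 - ρ) * ((Q ^ 2)⁻¹ * (T ^ 2)⁻¹) * C := by
      have : S⁻¹ ^ 2 / T ^ 2 = (S ^ 2)⁻¹ * (T ^ 2)⁻¹ := by
        rw [inv_pow, div_eq_mul_inv]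
      rw [this]
      have h3 : (S ^ 2)⁻¹ * (T ^ 2)⁻¹ ≤ (Q ^ 2)⁻¹ * (T ^ 2)⁻¹ :=
        mul_le_mul_of_nonneg_right i1 (by positivity)
      exact mul_le_mul_of_nonneg_right (mul_le_mul_of_nonneg_left h3 hρ1') hC
    nlinarith [p1, p2]
  · have hX : 0 ≤ (S ^ 2)⁻¹ * B := by positivity
    rw [min_mul_of_nonneg _ _ hX, ← min_add_add_right]
    have t2 : (Q ^ 2)⁻¹ * ((1 - ρ) * (T ^ 2)⁻¹ * C) ≤ C := by
      calc (Q ^ 2)⁻¹ * ((1 - ρ) * (T ^ 2)⁻¹ * C) ≤ T ^ 2 * ((1 - ρ) * (T ^ 2)⁻¹ * C) :=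
            mul_le_mul_of_nonneg_right i2 (by positivity)
        _ = (1 - ρ) * C * (T ^ 2 * (T ^ 2)⁻¹) := by ring
        _ = (1 - ρ) * C := by rw [mul_inv_cancel₀ (by positivity : (T:ℝ) ^ 2 ≠ 0), mul_one]
        _ ≤ C := by nlinarith
    apply le_min
    · have t1 : (Q ^ 2)⁻¹ * (ρ * B) ≤ ρ⁻¹ * ((S ^ 2)⁻¹ * B) := by
        calc (Q ^ 2)⁻¹ * (ρ * B) ≤ ρ⁻¹ * ρ⁻¹ * (S ^ 2)⁻¹ * (ρ * B) :=
              mul_le_mul_of_nonneg_right i3 (mul_nonneg hρ0.le hB)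
          _ = ρ⁻¹ * ((S ^ 2)⁻¹ * B) * (ρ⁻¹ * ρ) := by ring
          _ = ρ⁻¹ * ((S ^ 2)⁻¹ * B) := by rw [inv_mul_cancel₀ hρ0.ne', mul_one]
      calc (Q ^ 2)⁻¹ * (ρ * B + (1 - ρ) * (T ^ 2)⁻¹ * C)
          = (Q ^ 2)⁻¹ * (ρ * B) + (Q ^ 2)⁻¹ * ((1 - ρ) * (T ^ 2)⁻¹ * C) := by ring
        _ ≤ ρ⁻¹ * ((S ^ 2)⁻¹ * B) + C := add_le_add t1 t2
    · have hrw : T ^ 2 / S⁻¹ ^ 2 * ((S ^ 2)⁻¹ * B) = T ^ 2 * B := by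
        field_simp
      rw [hrw]
      have t1 : (Q ^ 2)⁻¹ * (ρ * B) ≤ T ^ 2 * B := by
        calc (Q ^ 2)⁻¹ * (ρ * B) ≤ T ^ 2 * (ρ * B) :=
              mul_le_mul_of_nonneg_right i2 (mul_nonneg hρ0.le hB)
          _ ≤ T ^ 2 * B := mul_le_mul_of_nonneg_left (by nlinarith : ρ * B ≤ B) (by positivity)
      calc (Q ^ 2)⁻¹ * (ρ * B + (1 - ρ) * (T ^ 2)⁻¹ * C)
          = (Q ^ 2)⁻¹ * (ρ * B) + (Q ^ 2)⁻¹ * ((1 - ρ) * (T ^ 2)⁻¹ * C) := by ring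
        _ ≤ T ^ 2 * B + C := add_le_add t1 t2

lemma count_mem_powersetCard (n k : ℕ) (hk : 1 ≤ k) (i : Fin n) :
    ((Finset.powersetCard k (Finset.univ : Finset (Fin n))).filter (fun s => i ∈ s)).card
      = (n - 1).choose (k - 1) := by
  have h1 : (Finset.powersetCard (k - 1) ((Finset.univ : Finset (Fin n)).erase i)).card
      = (n - 1).choose (k - 1) := by
    rw [Finset.card_powersetCard, Finset.card_erase_of_mem (Finset.mem_univ i),
      Finset.card_univ, Fintype.card_fin]
  rw [← h1]
  apply Finset.card_bij' (fun s _ => s.erase i) (fun t _ => insert i t)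
  · intro s hs
    exact Finset.insert_erase (Finset.mem_filter.1 hs).2
  · intro t ht
    obtain ⟨hsub, -⟩ := Finset.mem_powersetCard.1 ht
    exact Finset.erase_insert (fun h => (Finset.mem_erase.1 (hsub h)).1 rfl)
  · intro s hs
    obtain ⟨hsP, hi⟩ := Finset.mem_filter.1 hs
    obtain ⟨-, hcard⟩ := Finset.mem_powersetCard.1 hsP
    refine Finset.mem_powersetCard.2 ⟨?_, ?_⟩
    · intro x hx
      obtain ⟨hxi, -⟩ := Finset.mem_erase.1 hx
      exact Finset.mem_erase.2 ⟨hxi, Finset.mem_univ x⟩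
    · rw [Finset.card_erase_of_mem hi, hcard]
  · intro t ht
    obtain ⟨hsub, hcard⟩ := Finset.mem_powersetCard.1 ht
    have hi : i ∉ t := fun h => (Finset.mem_erase.1 (hsub h)).1 rfl
    refine Finset.mem_filter.2 ⟨Finset.mem_powersetCard.2 ⟨Finset.subset_univ _, ?_⟩,
      Finset.mem_insert_self i t⟩
    rw [Finset.card_insert_of_notMem hi, hcard, Nat.sub_add_cancel hk]

lemma sum_powersetCard_sum (n k : ℕ) (hk : 1 ≤ k) (z : Fin n → ℝ) :
    ∑ s ∈ Finset.powersetCard k (Finset.univ : Finset (Fin n)), ∑ i ∈ s, z i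
      = ((n - 1).choose (k - 1) : ℝ) * ∑ i, z i := by
  set P := Finset.powersetCard k (Finset.univ : Finset (Fin n)) with hP
  calc ∑ s ∈ P, ∑ i ∈ s, z i
      = ∑ s ∈ P, ∑ i, (if i ∈ s then z i else 0) := by
        refine Finset.sum_congr rfl fun s _ => ?_
        rw [Finset.sum_ite_mem, Finset.univ_inter]
    _ = ∑ i, ∑ s ∈ P, (if i ∈ s then z i else 0) := Finset.sum_comm
    _ = ∑ i : Fin n, (((P.filter (fun s => i ∈ s)).card : ℝ) * z i) := by
        refine Finset.sum_congr rfl fun i _ => ?_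
        rw [← Finset.sum_filter, Finset.sum_const, nsmul_eq_mul]
    _ = ((n - 1).choose (k - 1) : ℝ) * ∑ i, z i := by
        simp_rw [hP, count_mem_powersetCard n k hk]
        rw [← Finset.mul_sum]

theorem first_order_estimates (n k : ℕ) (hn : 2 ≤ n) (hk : 1 ≤ k) (hkn : k ≤ n - 1)
    (ρ : ℝ) (hρ0 : 0 < ρ) (hρ1 : ρ ≤ 1)
    (z : Fin n → ℝ) (hz : z ∈ kCone n k) (ξ : Fin n → ℝ) :
    ρ * (∑ p, fderiv ℝ (gammaOne n k) z (Pi.single p 1) * ξ p ^ 2) +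
        (1 - ρ) * (gammaOne n k z ^ 2 / (∑ i, z i) ^ 2) * (∑ p, ξ p ^ 2) ≤
      (∑ p, fderiv ℝ (gammaRho n k ρ) z (Pi.single p 1) * ξ p ^ 2) ∧
    (∑ p, fderiv ℝ (gammaRho n k ρ) z (Pi.single p 1) * ξ p ^ 2) ≤
      min ρ⁻¹ ((∑ i, z i) ^ 2 / gammaOne n k z ^ 2) *
          (∑ p, fderiv ℝ (gammaOne n k) z (Pi.single p 1) * ξ p ^ 2) +
        (∑ p, ξ p ^ 2) := by
  classical
  have hkn' : k ≤ n := hkn.trans (Nat.sub_le n 1)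
  set P := Finset.powersetCard k (Finset.univ : Finset (Fin n)) with hPdef
  set T := ∑ i, z i with hTdef
  set S := ∑ s ∈ P, (∑ i ∈ s, z i)⁻¹ with hSdef
  have hσ : ∀ s ∈ P, 0 < ∑ i ∈ s, z i := fun s hs =>
    hz s (Finset.mem_powersetCard.1 hs).2
  have hPne : P.Nonempty := by
    rw [← Finset.card_pos, hPdef, Finset.card_powersetCard, Finset.card_univ, Fintype.card_fin]
    exact Nat.choose_pos hkn'
  have hS : 0 < S := Finset.sum_pos (fun s hs => inv_pos.2 (hσ s hs)) hPne
  have hsum : ∑ s ∈ P, ∑ i ∈ s, z i = ((n - 1).choose (k - 1) : ℝ) * T := by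
    rw [hPdef, hTdef]; exact sum_powersetCard_sum n k hk z
  have hc : (0:ℝ) < ((n - 1).choose (k - 1) : ℝ) := by
    exact_mod_cast Nat.choose_pos (by omega : k - 1 ≤ n - 1)
  have hT : 0 < T := by
    have h1 : 0 < ∑ s ∈ P, ∑ i ∈ s, z i := Finset.sum_pos hσ hPne
    rw [hsum] at h1
    by_contra h
    push_neg at h
    nlinarith [mul_nonneg hc.le (neg_nonneg.2 h)]
  have hST : 1 ≤ S * T := by
    have hex : ∃ s ∈ P, ∑ i ∈ s, z i ≤ T := by
      by_contra h
      push_neg at h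
      have h2 : ∑ s ∈ P, T < ∑ s ∈ P, ∑ i ∈ s, z i :=
        Finset.sum_lt_sum_of_nonempty hPne h
      rw [Finset.sum_const, hsum, nsmul_eq_mul] at h2
      have hcard : P.card = n.choose k := by
        rw [hPdef, Finset.card_powersetCard, Finset.card_univ, Fintype.card_fin]
      have hle : (n - 1).choose (k - 1) ≤ n.choose k := by
        obtain ⟨m, rfl⟩ : ∃ m, n = m + 1 := ⟨n - 1, by omega⟩
        obtain ⟨j, rfl⟩ : ∃ j, k = j + 1 := ⟨k - 1, by omega⟩
        simp only [Nat.add_sub_cancel]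
        rw [Nat.choose_succ_succ']
        exact Nat.le_add_right _ _
      have hle' : ((n - 1).choose (k - 1) : ℝ) ≤ (P.card : ℝ) := by
        exact_mod_cast hcard ▸ hle
      nlinarith
    obtain ⟨s0, hs0P, hs0⟩ := hex
    have h1 : (∑ i ∈ s0, z i)⁻¹ ≤ S :=
      Finset.single_le_sum (fun s hs => (inv_pos.2 (hσ s hs)).le) hs0P
    have h2 : T⁻¹ ≤ (∑ i ∈ s0, z i)⁻¹ := inv_anti₀ (hσ s0 hs0P) hs0
    have h3 : T⁻¹ ≤ S := h2.trans h1
    nlinarith [mul_le_mul_of_nonneg_right h3 hT.le, inv_mul_cancel₀ hT.ne']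
  -- derivatives
  have hL : ∀ s : Finset (Fin n), HasFDerivAt (fun y : Fin n → ℝ => ∑ i ∈ s, y i)
      (∑ i ∈ s, ContinuousLinearMap.proj i : (Fin n → ℝ) →L[ℝ] ℝ) z := by
    intro s
    apply HasFDerivAt.fun_sum
    intro i _
    exact (ContinuousLinearMap.proj (R := ℝ) (φ := fun _ : Fin n => ℝ) i).hasFDerivAt
  have hInv : ∀ s ∈ P, HasFDerivAt (fun y : Fin n → ℝ => (∑ i ∈ s, y i)⁻¹)
      ((ContinuousLinearMap.smulRight (1 : ℝ →L[ℝ] ℝ) (-((∑ i ∈ s, z i) ^ 2)⁻¹)).comp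
        (∑ i ∈ s, ContinuousLinearMap.proj i)) z := fun s hs =>
    (hasFDerivAt_inv (hσ s hs).ne').comp z (hL s)
  have hSder : HasFDerivAt (fun y : Fin n → ℝ => ∑ s ∈ P, (∑ i ∈ s, y i)⁻¹)
      (∑ s ∈ P, (ContinuousLinearMap.smulRight (1 : ℝ →L[ℝ] ℝ) (-((∑ i ∈ s, z i) ^ 2)⁻¹)).comp
        (∑ i ∈ s, ContinuousLinearMap.proj i)) z :=
    HasFDerivAt.fun_sum hInv
  have hγ1 : HasFDerivAt (gammaOne n k)
      ((ContinuousLinearMap.smulRight (1 : ℝ →L[ℝ] ℝ) (-(S ^ 2)⁻¹)).comp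
        (∑ s ∈ P, (ContinuousLinearMap.smulRight (1 : ℝ →L[ℝ] ℝ) (-((∑ i ∈ s, z i) ^ 2)⁻¹)).comp
          (∑ i ∈ s, ContinuousLinearMap.proj i))) z :=
    (hasFDerivAt_inv hS.ne').comp z hSder
  set A : Fin n → ℝ := fun p => ∑ s ∈ P, (if p ∈ s then ((∑ i ∈ s, z i) ^ 2)⁻¹ else 0)
    with hAdef
  have hD1 : ∀ p, fderiv ℝ (gammaOne n k) z (Pi.single p 1) = (S ^ 2)⁻¹ * A p := by
    intro p
    rw [hγ1.fderiv]
    simp only [ContinuousLinearMap.coe_comp', Function.comp_apply,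
      ContinuousLinearMap.coe_sum', Finset.sum_apply,
      ContinuousLinearMap.smulRight_apply, ContinuousLinearMap.one_apply,
      ContinuousLinearMap.proj_apply, smul_eq_mul, Finset.sum_pi_single', hAdef]
    have hcong : ∀ s ∈ P, (if p ∈ s then (1:ℝ) else 0) * -((∑ i ∈ s, z i) ^ 2)⁻¹
        = -(if p ∈ s then ((∑ i ∈ s, z i) ^ 2)⁻¹ else 0) := by
      intro s _; split <;> ring
    rw [Finset.sum_congr rfl hcong, Finset.sum_neg_distrib]
    ring
  -- gammaRho derivative
  set Q : ℝ := ρ * S + (1 - ρ) / T with hQdef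
  have hQpos : 0 < Q := by
    have h1 : 0 ≤ (1 - ρ) / T := div_nonneg (by linarith) hT.le
    have h2 : 0 < ρ * S := mul_pos hρ0 hS
    rw [hQdef]; linarith
  have hInvρ : ∀ s ∈ P, HasFDerivAt (fun y : Fin n → ℝ => ρ / (∑ i ∈ s, y i))
      (ρ • ((ContinuousLinearMap.smulRight (1 : ℝ →L[ℝ] ℝ) (-((∑ i ∈ s, z i) ^ 2)⁻¹)).comp
        (∑ i ∈ s, ContinuousLinearMap.proj i))) z := by
    intro s hs
    simpa [div_eq_mul_inv] using (hInv s hs).const_mul ρ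
  have hlast : HasFDerivAt (fun y : Fin n → ℝ => (1 - ρ) / (∑ i, y i))
      ((1 - ρ) • ((ContinuousLinearMap.smulRight (1 : ℝ →L[ℝ] ℝ) (-(T ^ 2)⁻¹)).comp
        (∑ i, ContinuousLinearMap.proj i))) z := by
    have h0 : HasFDerivAt (fun y : Fin n → ℝ => (∑ i, y i)⁻¹)
        ((ContinuousLinearMap.smulRight (1 : ℝ →L[ℝ] ℝ) (-(T ^ 2)⁻¹)).comp
          (∑ i, ContinuousLinearMap.proj i)) z :=
      (hasFDerivAt_inv hT.ne').comp z (hL Finset.univ)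
    simpa [div_eq_mul_inv] using h0.const_mul (1 - ρ)
  have hGder : HasFDerivAt
      (fun y : Fin n → ℝ => (∑ s ∈ P, ρ / (∑ i ∈ s, y i)) + (1 - ρ) / (∑ i, y i))
      ((∑ s ∈ P, ρ • ((ContinuousLinearMap.smulRight (1 : ℝ →L[ℝ] ℝ)
          (-((∑ i ∈ s, z i) ^ 2)⁻¹)).comp (∑ i ∈ s, ContinuousLinearMap.proj i))) +
        (1 - ρ) • ((ContinuousLinearMap.smulRight (1 : ℝ →L[ℝ] ℝ) (-(T ^ 2)⁻¹)).comp
          (∑ i, ContinuousLinearMap.proj i))) z :=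
    (HasFDerivAt.fun_sum hInvρ).add hlast
  have hGz : (∑ s ∈ P, ρ / (∑ i ∈ s, z i)) + (1 - ρ) / T = Q := by
    rw [hQdef, hSdef]
    simp only [div_eq_mul_inv]
    rw [← Finset.mul_sum]
  have hγρ : HasFDerivAt (gammaRho n k ρ)
      ((ContinuousLinearMap.smulRight (1 : ℝ →L[ℝ] ℝ) (-(Q ^ 2)⁻¹)).comp
        ((∑ s ∈ P, ρ • ((ContinuousLinearMap.smulRight (1 : ℝ →L[ℝ] ℝ)
            (-((∑ i ∈ s, z i) ^ 2)⁻¹)).comp (∑ i ∈ s, ContinuousLinearMap.proj i))) +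
          (1 - ρ) • ((ContinuousLinearMap.smulRight (1 : ℝ →L[ℝ] ℝ) (-(T ^ 2)⁻¹)).comp
            (∑ i, ContinuousLinearMap.proj i)))) z := by
    refine HasFDerivAt.comp z ?_ hGder
    rw [hGz]
    exact hasFDerivAt_inv hQpos.ne'
  have hDρ : ∀ p, fderiv ℝ (gammaRho n k ρ) z (Pi.single p 1)
      = (Q ^ 2)⁻¹ * (ρ * A p + (1 - ρ) * (T ^ 2)⁻¹) := by
    intro p
    rw [hγρ.fderiv]
    simp only [ContinuousLinearMap.coe_comp', Function.comp_apply,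
      ContinuousLinearMap.add_apply, ContinuousLinearMap.coe_sum', Finset.sum_apply,
      ContinuousLinearMap.coe_smul', Pi.smul_apply,
      ContinuousLinearMap.smulRight_apply, ContinuousLinearMap.one_apply,
      ContinuousLinearMap.proj_apply, smul_eq_mul, Finset.sum_pi_single', hAdef]
    have hcong : ∀ s ∈ P, ρ * ((if p ∈ s then (1:ℝ) else 0) * -((∑ i ∈ s, z i) ^ 2)⁻¹)
        = -(ρ * (if p ∈ s then ((∑ i ∈ s, z i) ^ 2)⁻¹ else 0)) := by
      intro s _; split <;> ring
    rw [Finset.sum_congr rfl hcong, Finset.sum_neg_distrib, ← Finset.mul_sum]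
    simp only [Finset.mem_univ, if_true]
    ring
  -- assemble
  set B : ℝ := ∑ p, A p * ξ p ^ 2 with hBdef
  set C : ℝ := ∑ p, ξ p ^ 2 with hCdef
  have hAnn : ∀ p, 0 ≤ A p := fun p =>
    Finset.sum_nonneg fun s _ => by positivity
  have hB : 0 ≤ B :=
    Finset.sum_nonneg fun p _ => mul_nonneg (hAnn p) (sq_nonneg _)
  have hC : 0 ≤ C := Finset.sum_nonneg fun p _ => sq_nonneg _
  have e1 : ∑ p, fderiv ℝ (gammaOne n k) z (Pi.single p 1) * ξ p ^ 2 = (S ^ 2)⁻¹ * B := by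
    rw [hBdef, Finset.mul_sum]
    refine Finset.sum_congr rfl fun p _ => ?_
    rw [hD1 p]; ring
  have e2 : ∑ p, fderiv ℝ (gammaRho n k ρ) z (Pi.single p 1) * ξ p ^ 2
      = (Q ^ 2)⁻¹ * (ρ * B + (1 - ρ) * (T ^ 2)⁻¹ * C) := by
    have : ∀ p ∈ (Finset.univ : Finset (Fin n)),
        fderiv ℝ (gammaRho n k ρ) z (Pi.single p 1) * ξ p ^ 2
          = (Q ^ 2)⁻¹ * ρ * (A p * ξ p ^ 2) + (Q ^ 2)⁻¹ * ((1 - ρ) * (T ^ 2)⁻¹) * ξ p ^ 2 := by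
      intro p _
      rw [hDρ p]; ring
    rw [Finset.sum_congr rfl this, Finset.sum_add_distrib, ← Finset.mul_sum, ← Finset.mul_sum,
      hBdef, hCdef]
    ring
  have hγ1z : gammaOne n k z = S⁻¹ := by
    rw [hSdef, hPdef, gammaOne]
  rw [e1, e2, hγ1z]
  have halg := gamma_algebra S T ρ B C hS hT hρ0 hρ1 hST hB hC
  rw [hQdef]
  exact halg
end

section
/- Let T be a totally symmetric 3-tensor on ℝⁿ (T_{ipq} symmetric in all three indices) and Z a symmetric matrix with tr(Z) ≠ 0. Then 4 ∑_{i,p,q} (T_{ipq} - (tr(T_i)/tr(Z)) Z_{pq})² ≥ (2/tr(Z)²) ∑_{i,p} (|Z|² δ_{ip} - (Z²)_{ip}) tr(T_i) tr(T_p), where tr(T_i) = ∑_q T_{iqq} and (Z²)_{ip} = ∑_q Z_{iq} Z_{qp}. -/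
/-!
Put `a i p q = T i p q - (tr Tᵢ / tr Z) Z p q`. Since `(x - y)² ≤ 2x² + 2y²`, the sum of the
squares of the antisymmetrisations `a i p q - a p i q` is at most `4 ∑ a²`. Symmetry of `T` in its
first two indices makes the `T`-terms cancel in `a i p q - a p i q`, leaving
`(tr Tₚ Z i q - tr Tᵢ Z p q) / tr Z`, and the sum of these squares is the stated quadratic form
(a Lagrange-type identity, with `Z Zᵀ = Z²` for symmetric `Z`). With `x / 0 = 0` these
identities hold verbatim when `tr Z = 0`.
-/

open Finset

theorem sum_sq_sub_swap_le_four_mul {ι κ : Type*} [Fintype ι] [Fintype κ] (a : ι → ι → κ → ℝ) :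
    ∑ i, ∑ p, ∑ q, (a i p q - a p i q) ^ 2 ≤ 4 * ∑ i, ∑ p, ∑ q, a i p q ^ 2 := by
  have hswap : ∑ i, ∑ p, ∑ q, a p i q ^ 2 = ∑ i, ∑ p, ∑ q, a i p q ^ 2 := sum_comm
  calc ∑ i, ∑ p, ∑ q, (a i p q - a p i q) ^ 2
      ≤ ∑ i, ∑ p, ∑ q, (2 * a i p q ^ 2 + 2 * a p i q ^ 2) := by
        gcongr with i _ p _ q _
        nlinarith [sq_nonneg (a i p q + a p i q)]
    _ = 4 * ∑ i, ∑ p, ∑ q, a i p q ^ 2 := by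
        simp only [sum_add_distrib, ← mul_sum, hswap]
        ring

theorem sum_sq_mul_sub_mul_eq {ι κ : Type*} [Fintype ι] [DecidableEq ι] [Fintype κ]
    (t : ι → ℝ) (Z : Matrix ι κ ℝ) :
    ∑ i, ∑ p, ∑ q, (t p * Z i q - t i * Z p q) ^ 2 =
      2 * ∑ i, ∑ p, ((if i = p then ∑ a, ∑ b, Z a b ^ 2 else 0) - ∑ q, Z i q * Z p q) *
        (t i * t p) := by
  have hexpand : ∀ i p, ∑ q, (t p * Z i q - t i * Z p q) ^ 2 =
      t p ^ 2 * ∑ q, Z i q ^ 2 + t i ^ 2 * ∑ q, Z p q ^ 2 -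
        2 * ((∑ q, Z i q * Z p q) * (t i * t p)) := by
    intro i p
    simp only [mul_sum, sum_mul, ← sum_add_distrib, ← sum_sub_distrib]
    exact sum_congr rfl fun q _ => by ring
  simp only [hexpand, sum_add_distrib, sum_sub_distrib, sub_mul, ite_mul, zero_mul,
    sum_ite_eq, mem_univ, if_true, ← mul_sum, ← sum_mul]
  simp only [← sq]
  ring

theorem totally_symmetric_tensor_inequality_general (n : ℕ) (T : Fin n → Fin n → Fin n → ℝ)
    (hT1 : ∀ i p q, T i p q = T p i q)
    (Z : Matrix (Fin n) (Fin n) ℝ) (hZ : ∀ i j, Z i j = Z j i) :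
    (2 / Z.trace ^ 2) *
        (∑ i, ∑ p, ((if i = p then ∑ a, ∑ b, Z a b ^ 2 else 0) - ∑ q, Z i q * Z q p) *
          ((∑ q, T i q q) * (∑ q, T p q q))) ≤
      4 * ∑ i, ∑ p, ∑ q, (T i p q - ((∑ r, T i r r) / Z.trace) * Z p q) ^ 2 := by
  set t : Fin n → ℝ := fun i => ∑ q, T i q q
  have hcancel : ∀ i p q, (T i p q - t i / Z.trace * Z p q) - (T p i q - t p / Z.trace * Z i q) =
      (t p * Z i q - t i * Z p q) / Z.trace := by
    intro i p q
    rw [hT1 i p q]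
    ring
  have hsq : ∀ i p, ∑ q, Z i q * Z q p = ∑ q, Z i q * Z p q := fun i p => by simp only [hZ _ p]
  calc _ = (∑ i, ∑ p, ∑ q, (t p * Z i q - t i * Z p q) ^ 2) / Z.trace ^ 2 := by
        rw [sum_sq_mul_sub_mul_eq]
        simp only [hsq]
        ring
    _ = ∑ i, ∑ p, ∑ q,
          ((T i p q - t i / Z.trace * Z p q) - (T p i q - t p / Z.trace * Z i q)) ^ 2 := by
        simp only [hcancel, div_pow, sum_div]
    _ ≤ _ := sum_sq_sub_swap_le_four_mul _

theorem totally_symmetric_tensor_inequality (n : ℕ) (T : Fin n → Fin n → Fin n → ℝ)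
    (hT1 : ∀ i p q, T i p q = T p i q) (hT2 : ∀ i p q, T i p q = T i q p)
    (Z : Matrix (Fin n) (Fin n) ℝ) (hZ : ∀ i j, Z i j = Z j i)
    (htr : Z.trace ≠ 0) :
    (2 / Z.trace ^ 2) *
        (∑ i, ∑ p, ((if i = p then ∑ a, ∑ b, Z a b ^ 2 else 0) - ∑ q, Z i q * Z q p) *
          ((∑ q, T i q q) * (∑ q, T p q q))) ≤
      4 * ∑ i, ∑ p, ∑ q, (T i p q - ((∑ r, T i r r) / Z.trace) * Z p q) ^ 2 :=
  totally_symmetric_tensor_inequality_general n T hT1 Z hZ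
end

section
/- Let z lie in the k-positive cone Γ (k ≤ n-1) with z₁ ≤ ⋯ ≤ z_n, and let μ, K > 0, η ∈ (0,1], ρ ∈ (0,1] satisfy 0 ≤ γ_{k,ρ}(z) - 2μ tr(z) + K. Define h = γ_{k,ρ}(z) - μ tr(z) + K and f = (-z₁ - η γ_{k,ρ}(z))/h. Then μ tr(z) ≤ h and, if f ≥ 0, then f ≤ (k-1)/μ. -/
open Finset

/-!
The first bound is the hypothesis rearranged. For the second, on the `k`-positive cone with
`k < n` every entry lies below the trace, and `-z₁` is bounded by the other `k - 1` entries of a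
`k`-subset containing it; hence the numerator of `f` is at most `(k - 1) tr z`, while
`h ≥ μ tr z > 0`.
-/

namespace kCone

variable {n k : ℕ} {z : Fin n → ℝ}

/-- Summing the sums over `s.erase i` for `i ∈ s` counts every entry `#s - 1` times, so positivity
propagates from `k`-subsets to all larger subsets. -/
theorem sum_pos_of_le_card (hz : z ∈ kCone n k) {s : Finset (Fin n)} (hs : k ≤ #s) :
    0 < ∑ i ∈ s, z i := by
  obtain ⟨d, hd⟩ := Nat.exists_eq_add_of_le hs
  induction d generalizing s with
  | zero => exact hz s hd
  | succ d ih =>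
    have herase : ∀ i ∈ s, 0 < ∑ j ∈ s.erase i, z j := fun i hi =>
      ih (by rw [card_erase_of_mem hi]; omega) (by rw [card_erase_of_mem hi]; omega)
    have hdouble : ∑ i ∈ s, ∑ j ∈ s.erase i, z j = ((#s : ℝ) - 1) * ∑ i ∈ s, z i := by
      rw [sum_congr rfl fun i hi => sum_erase_eq_sub hi, sum_sub_distrib, sum_const, nsmul_eq_mul]
      ring
    have hne : s.Nonempty := card_pos.mp (by omega)
    have hcard : (0 : ℝ) ≤ (#s : ℝ) - 1 := by
      have : (1 : ℝ) ≤ #s := by exact_mod_cast hne.card_pos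
      linarith
    exact pos_of_mul_pos_right (hdouble ▸ sum_pos herase hne) hcard

theorem sum_univ_pos (hz : z ∈ kCone n k) (hkn : k ≤ n) : 0 < ∑ i, z i :=
  sum_pos_of_le_card hz (by rwa [card_univ, Fintype.card_fin])

theorem lt_sum_univ (hz : z ∈ kCone n k) (hkn : k < n) (i : Fin n) : z i < ∑ j, z j := by
  have hrest : 0 < ∑ j ∈ univ.erase i, z j :=
    sum_pos_of_le_card hz (by rw [card_erase_of_mem (mem_univ i), card_univ, Fintype.card_fin]; omega)
  rw [sum_erase_eq_sub (mem_univ i)] at hrest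
  linarith

/-- Complete `i` to a `k`-subset: its other `k - 1` entries are each below the trace. -/
theorem neg_le_sub_one_mul_sum_univ (hz : z ∈ kCone n k) (hk : 1 ≤ k) (hkn : k < n) (i : Fin n) :
    -z i ≤ ((k : ℝ) - 1) * ∑ j, z j := by
  obtain ⟨t, hti, htcard⟩ := exists_subset_card_eq (s := univ.erase i) (n := k - 1)
    (by rw [card_erase_of_mem (mem_univ i), card_univ, Fintype.card_fin]; omega)
  have hit : i ∉ t := fun h => (mem_erase.mp (hti h)).1 rfl
  have hpos : 0 < z i + ∑ j ∈ t, z j := by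
    rw [← sum_insert hit]
    exact hz _ (by rw [card_insert_of_notMem hit, htcard]; omega)
  have hrest : ∑ j ∈ t, z j ≤ ((k : ℝ) - 1) * ∑ j, z j := by
    have := sum_le_card_nsmul t z _ fun j _ => (lt_sum_univ hz hkn j).le
    rwa [htcard, nsmul_eq_mul, Nat.cast_sub hk, Nat.cast_one] at this
  linarith

end kCone

theorem gammaRho_nonneg {n k : ℕ} {ρ : ℝ} {z : Fin n → ℝ} (hρ0 : 0 ≤ ρ) (hρ1 : ρ ≤ 1)
    (hz : z ∈ kCone n k) (hkn : k ≤ n) : 0 ≤ gammaRho n k ρ z := by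
  have hT := kCone.sum_univ_pos hz hkn
  refine inv_nonneg.mpr (add_nonneg (sum_nonneg fun s hs => ?_) (div_nonneg (by linarith) hT.le))
  exact div_nonneg hρ0 (hz s (mem_powersetCard.mp hs).2).le

theorem pinching_quantity_bounds (n k : ℕ) (hk : 1 ≤ k) (hkn : k ≤ n - 1)
    (ρ η μ K : ℝ) (hρ0 : 0 < ρ) (hρ1 : ρ ≤ 1) (hη0 : 0 < η)
    (hμ : 0 < μ)
    (z : Fin n → ℝ) (hz : z ∈ kCone n k)
    (hpinch : 0 ≤ gammaRho n k ρ z - 2 * μ * (∑ i, z i) + K) :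
    μ * (∑ i, z i) ≤ gammaRho n k ρ z - μ * (∑ i, z i) + K ∧
    (0 ≤ (-z ⟨0, by omega⟩ - η * gammaRho n k ρ z) /
        (gammaRho n k ρ z - μ * (∑ i, z i) + K) →
      (-z ⟨0, by omega⟩ - η * gammaRho n k ρ z) /
        (gammaRho n k ρ z - μ * (∑ i, z i) + K) ≤ ((k : ℝ) - 1) / μ) := by
  set T := ∑ i, z i
  set γ := gammaRho n k ρ z
  have hμT : μ * T ≤ γ - μ * T + K := by linarith
  refine ⟨hμT, fun _ => ?_⟩
  have hT : 0 < T := kCone.sum_univ_pos hz (by omega)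
  have hγ : 0 ≤ γ := gammaRho_nonneg hρ0.le hρ1 hz (by omega)
  have hnum : -z ⟨0, by omega⟩ - η * γ ≤ ((k : ℝ) - 1) * T := by
    linarith [kCone.neg_le_sub_one_mul_sum_univ hz hk (by omega) ⟨0, by omega⟩,
      mul_nonneg hη0.le hγ]
  have hk1 : (0 : ℝ) ≤ (k : ℝ) - 1 := by
    have : (1 : ℝ) ≤ k := by exact_mod_cast hk
    linarith
  calc (-z ⟨0, by omega⟩ - η * γ) / (γ - μ * T + K)
      ≤ ((k : ℝ) - 1) * T / (γ - μ * T + K) := by gcongr; linarith [mul_pos hμ hT]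
    _ ≤ ((k : ℝ) - 1) * T / (μ * T) := by gcongr
    _ = ((k : ℝ) - 1) / μ := mul_div_mul_right _ _ hT.ne'
end
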